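/- arXiv:0809.2074 — 2 statements merged into one kernel-verified Lean document; each statement's English description precedes it below -/
import Mathlib

section
/- Let q ≥ 3 be an integer and for a complex number s ≠ 1 and an integer ℓ coprime to q define A(s,ℓ,q) = ∑_{1 ≤ a,b ≤ q, ab ≡ ℓ (mod q)} q^{−2s} (ζ(s,a/q) − 1/(s−1))(ζ(s,b/q) − 1/(s−1)). Then for every real s with s > 0 and s ≠ 1, ∑_{χ ≠ χ₀ (mod q)} |L(s,χ)|⁴ = φ(q) ∑_{ℓ=1, (ℓ,q)=1}^{q} |A(s,ℓ,q)|² − |∑_{ℓ=1, (ℓ,q)=1}^{q} A(s,ℓ,q)|². -/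
/-!
For `χ ≠ χ₀` the character sum kills the constant `1/(s-1)`, so
`L(s,χ) = q^{-s} ∑_a χ(a) (ζ(s,a/q) - 1/(s-1))`, and multiplying out the square gives
`L(s,χ)² = ∑_ℓ χ(ℓ) A(s,ℓ,q)`. Parseval for the characters mod `q` turns the sum of
`|L(s,χ)|⁴ = |∑_ℓ χ(ℓ) A(s,ℓ,q)|²` over all `χ` into `φ(q) ∑_ℓ |A(s,ℓ,q)|²`, and the principal
character, left out on the left-hand side, contributes `|∑_ℓ A(s,ℓ,q)|²`.
-/

open HurwitzZeta
open scoped Classical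
open Finset

namespace ZMod

variable {q : ℕ} [NeZero q] {M : Type*} [AddCommMonoid M]

lemma sum_Icc_one_natCast (F : ZMod q → M) : ∑ a ∈ Icc 1 q, F a = ∑ x : ZMod q, F x := by
  refine sum_nbij' (fun a => (a : ZMod q)) (fun x => if x = 0 then q else x.val)
    (fun _ _ => mem_univ _) (fun x _ => ?_) (fun a ha => ?_) (fun x _ => ?_) (fun _ _ => rfl)
  · have := NeZero.pos q
    split_ifs with h
    · simp only [mem_Icc]; omega
    · have := (val_ne_zero x).2 h
      have := x.val_lt
      simp only [mem_Icc]; omega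
  · rw [mem_Icc] at ha
    split_ifs with h
    · exact (Nat.le_of_dvd ha.1 ((natCast_eq_zero_iff _ _).1 h)).antisymm ha.2
    · have : a ≠ q := by rintro rfl; exact h (natCast_self _)
      exact val_cast_of_lt (by omega)
  · split_ifs with h
    · rw [h, natCast_self]
    · exact natCast_zmod_val x

lemma sum_filter_coprime_Icc_one_natCast (F : ZMod q → M) :
    ∑ ℓ ∈ (Icc 1 q).filter (fun ℓ => ℓ.Coprime q), F ℓ = ∑ x : ZMod q with IsUnit x, F x := by
  simp only [sum_filter, ← sum_Icc_one_natCast, isUnit_iff_coprime]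

end ZMod

namespace MulChar

variable {M R : Type*} [CommMonoid M] [Fintype M] [CommSemiring R]

lemma sum_one_apply_mul [DecidablePred (IsUnit : M → Prop)] (f : M → R) :
    ∑ x, (1 : MulChar M R) x * f x = ∑ x with IsUnit x, f x := by
  rw [sum_filter]
  refine sum_congr rfl fun x _ => ?_
  split_ifs with hx
  · rw [one_apply hx, one_mul]
  · rw [map_nonunit _ hx, zero_mul]

variable [DecidableEq M]

def mulConvolution (f g : M → R) (z : M) : R :=
  ∑ x, ∑ y, if x * y = z then f x * g y else 0

lemma sum_mul_mul_sum_mul_eq_sum_mul_mulConvolution (χ : MulChar M R) (f g : M → R) :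
    (∑ x, χ x * f x) * (∑ y, χ y * g y) = ∑ z, χ z * mulConvolution f g z := by
  rw [sum_mul_sum]
  symm
  simp only [mulConvolution, mul_sum, mul_ite, mul_zero]
  rw [sum_comm]
  refine sum_congr rfl fun x _ => ?_
  rw [sum_comm]
  refine sum_congr rfl fun y _ => ?_
  rw [sum_ite_eq, if_pos (mem_univ _), map_mul]
  ring

end MulChar

namespace DirichletCharacter

lemma star_apply_eq_apply_inv {q : ℕ} (χ : DirichletCharacter ℂ q) {y : ZMod q}
    (hy : IsUnit y) :
    star (χ y) = χ y⁻¹ := by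
  rw [MulChar.star_apply', MulChar.inv_apply, ← hy.unit_spec, Ring.inverse_unit, ZMod.inv_coe_unit]

variable {q : ℕ} [NeZero q]

lemma sum_apply_mul_star_apply (x y : ZMod q) :
    ∑ χ : DirichletCharacter ℂ q, χ x * star (χ y) =
      if IsUnit y ∧ y = x then (q.totient : ℂ) else 0 := by
  by_cases hy : IsUnit y
  · rw [if_congr (and_iff_right hy) rfl rfl, ← sum_char_inv_mul_char_eq ℂ hy x]
    exact sum_congr rfl fun χ _ => by rw [star_apply_eq_apply_inv χ hy, mul_comm]
  · simp only [MulChar.map_nonunit _ hy, star_zero, mul_zero, sum_const_zero, hy, false_and,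
      if_false]

lemma sum_norm_sum_mul_sq_eq (B : ZMod q → ℂ) :
    ∑ χ : DirichletCharacter ℂ q, ‖∑ x, χ x * B x‖ ^ 2 =
      q.totient * ∑ x with IsUnit x, ‖B x‖ ^ 2 := by
  apply Complex.ofReal_injective
  push_cast
  simp only [← Complex.mul_conj', map_sum, map_mul, sum_mul_sum]
  calc ∑ χ : DirichletCharacter ℂ q, ∑ x, ∑ y, χ x * B x * (star (χ y) * star (B y))
      = ∑ x, ∑ y, (∑ χ : DirichletCharacter ℂ q, χ x * star (χ y)) * (B x * star (B y)) := by
        simp only [sum_mul]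
        rw [sum_comm]
        refine sum_congr rfl fun x _ => ?_
        rw [sum_comm]
        refine sum_congr rfl fun y _ => sum_congr rfl fun χ _ => ?_
        ring
    _ = q.totient * ∑ x with IsUnit x, B x * star (B x) := by
        simp only [sum_apply_mul_star_apply, ite_mul, zero_mul, sum_filter, mul_sum]
        refine sum_congr rfl fun x _ => ?_
        simp only [and_comm (a := IsUnit _), ite_and, sum_ite_eq', mem_univ, if_true, mul_ite,
          mul_zero]

lemma LFunction_eq_sum_mul_hurwitzZeta_sub {χ : DirichletCharacter ℂ q} (hχ : χ ≠ 1) (s c : ℂ) :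
    χ.LFunction s = q ^ (-s) * ∑ x, χ x * (hurwitzZeta (ZMod.toAddCircle x) s - c) := by
  rw [LFunction, ZMod.LFunction]
  simp only [mul_sub, sum_sub_distrib, ← sum_mul, MulChar.sum_eq_zero_of_ne_one hχ, zero_mul,
    sub_zero]

end DirichletCharacter

/-- For `q ≥ 3` and real `s > 0`, `s ≠ 1`, with
`A(s,ℓ,q) = ∑_{1≤a,b≤q, ab≡ℓ (q)} q^{−2s}(ζ(s,a/q)−1/(s−1))(ζ(s,b/q)−1/(s−1))`:
`∑_{χ ≠ χ₀ (q)} |L(s,χ)|⁴ = φ(q) ∑_{(ℓ,q)=1} |A(s,ℓ,q)|² − |∑_{(ℓ,q)=1} A(s,ℓ,q)|²`. -/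
theorem sum_abs_LFunction_pow_four_eq {q : ℕ} (hq : 3 ≤ q) :
    haveI : NeZero q := ⟨by omega⟩
    ∀ s : ℝ, 0 < s → s ≠ 1 →
      (fun A : ℕ → ℂ =>
        (∑ χ ∈ Finset.univ.filter (fun χ : DirichletCharacter ℂ q => χ ≠ 1),
            ‖χ.LFunction (s : ℂ)‖ ^ 4) =
          (q.totient : ℝ) *
            ∑ ℓ ∈ (Finset.Icc 1 q).filter (fun ℓ => Nat.Coprime ℓ q), ‖A ℓ‖ ^ 2 -
          ‖∑ ℓ ∈ (Finset.Icc 1 q).filter (fun ℓ => Nat.Coprime ℓ q), A ℓ‖ ^ 2)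
      (fun ℓ =>
        ∑ a ∈ Finset.Icc 1 q, ∑ b ∈ Finset.Icc 1 q,
          if ((a * b : ℕ) : ZMod q) = (ℓ : ZMod q) then
            (q : ℂ) ^ (-2 * (s : ℂ)) *
              ((hurwitzZeta ((a / q : ℝ) : UnitAddCircle) (s : ℂ) - 1 / ((s : ℂ) - 1)) *
                (hurwitzZeta ((b / q : ℝ) : UnitAddCircle) (s : ℂ) - 1 / ((s : ℂ) - 1)))
          else 0) := by
  have : NeZero q := ⟨by omega⟩
  intro s _ _
  set g : ZMod q → ℂ := fun x => hurwitzZeta (ZMod.toAddCircle x) s - 1 / ((s : ℂ) - 1)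
  set B : ZMod q → ℂ := fun z => (q : ℂ) ^ (-2 * (s : ℂ)) * MulChar.mulConvolution g g z
  have hA : ∀ ℓ : ℕ, (∑ a ∈ Icc 1 q, ∑ b ∈ Icc 1 q,
      if ((a * b : ℕ) : ZMod q) = (ℓ : ZMod q) then
        (q : ℂ) ^ (-2 * (s : ℂ)) *
          ((hurwitzZeta ((a / q : ℝ) : UnitAddCircle) (s : ℂ) - 1 / ((s : ℂ) - 1)) *
            (hurwitzZeta ((b / q : ℝ) : UnitAddCircle) (s : ℂ) - 1 / ((s : ℂ) - 1)))
      else 0) = B ℓ := fun ℓ => by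
    simp only [B, MulChar.mulConvolution, ← ZMod.sum_Icc_one_natCast, mul_sum, mul_ite, mul_zero,
      Nat.cast_mul, ZMod.toAddCircle_natCast, g]
  have hL : ∀ χ : DirichletCharacter ℂ q, χ ≠ 1 →
      ‖χ.LFunction s‖ ^ 4 = ‖∑ x, χ x * B x‖ ^ 2 := fun χ hχ => by
    have hpow : ((q : ℂ) ^ (-(s : ℂ))) ^ 2 = (q : ℂ) ^ (-2 * (s : ℂ)) := by
      rw [← Complex.cpow_nat_mul]; ring_nf
    have hL2 : χ.LFunction s ^ 2 = ∑ x, χ x * B x := by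
      rw [χ.LFunction_eq_sum_mul_hurwitzZeta_sub hχ s (1 / ((s : ℂ) - 1)), mul_pow, hpow,
        sq (∑ x, _), MulChar.sum_mul_mul_sum_mul_eq_sum_mul_mulConvolution, mul_sum]
      exact sum_congr rfl fun x _ => mul_left_comm _ _ _
    rw [← hL2, norm_pow, ← pow_mul]
  beta_reduce
  simp only [hA]
  rw [sum_congr rfl fun χ hχ => hL χ (mem_filter.1 hχ).2, filter_ne',
    sum_erase_eq_sub (mem_univ _), DirichletCharacter.sum_norm_sum_mul_sq_eq,
    MulChar.sum_one_apply_mul, ZMod.sum_filter_coprime_Icc_one_natCast (fun x => ‖B x‖ ^ 2),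
    ZMod.sum_filter_coprime_Icc_one_natCast B]
end

section
/- Let q ≥ 3 be an integer and for n ≥ 1 set a_q(n) = #{(u,v) : 1 ≤ u,v ≤ q, uv = n}. There is an absolute constant C > 0 such that for all q ≥ 3, ∑_{ℓ=1, (ℓ,q)=1}^{q} (∑_{q < n ≤ q², n ≡ ℓ (mod q)} a_q(n)/n)² ≤ C · log⁵(q+2)/q. -/
/-!
By Cauchy–Schwarz with weights `1/n`, the square of the residue-class sum for `ℓ` is at most
`(∑_{n ≡ ℓ} 1/n) · (∑_{n ≡ ℓ} a_q(n)²/n)`. The first factor is at most `H_q / q`, where `H_q` is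
the harmonic number: `n ↦ ⌊n/q⌋` is injective on a residue class in `(q, q²]`, with values in
`[1, q]`, and `n ≥ q ⌊n/q⌋`. Distinct `ℓ ≤ q` give disjoint classes, so summing over `ℓ` leaves
`(H_q / q) ∑_{n ≤ q²} a_q(n)²/n`. Finally `a_q(n)²` counts pairs of factorizations
`uv = u'v' = n`, and each is `u = ga, v = bm, u' = gb, v' = am` with `g, a, b, m ∈ [1, q]`
(Euler's four number theorem), so the last sum is at most `H_q⁴`. With `H_q ≤ 2 log (q + 2)`
one can take `C = 32`.
-/

open Finset

/-- `a_q(n) = #{(u,v) : 1 ≤ u,v ≤ q, uv = n}`, the number of ordered factorizations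
of `n` with both factors between `1` and `q`. -/
def aFac (q n : ℕ) : ℕ :=
  ((Finset.Icc 1 q ×ˢ Finset.Icc 1 q).filter (fun p => p.1 * p.2 = n)).card

theorem exists_four_factors_of_mul_eq_mul {α : Type*} [CommMonoidWithZero α]
    [IsCancelMulZero α] [DecompositionMonoid α] {u v u' v' : α} (hu : u ≠ 0)
    (h : u * v = u' * v') :
    ∃ g a b m, g * a = u ∧ b * m = v ∧ g * b = u' ∧ a * m = v' := by
  obtain ⟨g, a, ⟨b, rfl⟩, ⟨m, rfl⟩, rfl⟩ := exists_dvd_and_dvd_of_dvd_mul ⟨v, h.symm⟩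
  refine ⟨g, a, b, m, rfl, mul_left_cancel₀ hu ?_, rfl, rfl⟩
  rw [h]
  exact mul_mul_mul_comm g a b m

theorem sum_sum_filter_le_sum {ι α β M : Type*} [DecidableEq β] [AddCommMonoid M]
    [PartialOrder M] [IsOrderedAddMonoid M] {s : Finset ι} {t : Finset α} {key : α → β} {c : ι → β}
    (hc : Set.InjOn c s) {f : α → M} (hf : ∀ a ∈ t, 0 ≤ f a) :
    ∑ i ∈ s, ∑ a ∈ t with key a = c i, f a ≤ ∑ a ∈ t, f a := by
  rw [← sum_image (f := fun y => ∑ a ∈ t with key a = y, f a) hc]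
  exact sum_fiberwise_le_sum_of_sum_fiber_nonneg fun _ _ =>
    sum_nonneg fun a ha => hf a (mem_filter.1 ha).1

theorem sq_sum_div_le_sum_inv_mul_sum_sq_div (s : Finset ℕ) (a : ℕ → ℝ) :
    (∑ n ∈ s, a n / n) ^ 2 ≤ (∑ n ∈ s, (n : ℝ)⁻¹) * ∑ n ∈ s, a n ^ 2 / n :=
  sum_sq_le_sum_mul_sum_of_sq_le_mul s (fun _ _ => by positivity) (fun _ _ => by positivity)
    fun _ _ => le_of_eq (by ring)

theorem Nat.mem_Icc_one_of_dvd {d n q : ℕ} (hd : d ∣ n) (hn : n ∈ Icc 1 q) : d ∈ Icc 1 q := by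
  rw [mem_Icc] at hn ⊢
  exact ⟨Nat.pos_of_dvd_of_pos hd hn.1, (Nat.le_of_dvd hn.1 hd).trans hn.2⟩

theorem ZMod.natCast_injOn_Icc_one (q : ℕ) : Set.InjOn (fun ℓ : ℕ => (ℓ : ZMod q)) (Icc 1 q) := by
  intro a ha b hb hab
  rw [coe_Icc, Set.mem_Icc] at ha hb
  refine ((ZMod.natCast_eq_natCast_iff a b q).1 hab).eq_of_abs_lt (abs_sub_lt_iff.2 ?_)
  omega

theorem sum_Icc_inv_le_two_mul_log {q : ℕ} (hq : 1 ≤ q) :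
    ∑ j ∈ Icc 1 q, (j : ℝ)⁻¹ ≤ 2 * Real.log (q + 2) := by
  have hq' : (1 : ℝ) ≤ q := by exact_mod_cast hq
  have one_le_log : 1 ≤ Real.log (q + 2) := by
    rw [Real.le_log_iff_exp_le (by positivity)]
    linarith [Real.exp_one_lt_d9]
  have := Real.log_le_log (by positivity) (by linarith : (q : ℝ) ≤ q + 2)
  have := harmonic_le_one_add_log q
  rw [harmonic_eq_sum_Icc] at this
  push_cast at this
  linarith

def crossProducts : (ℕ × ℕ) × (ℕ × ℕ) → (ℕ × ℕ) × (ℕ × ℕ)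
  | ((g, a), (b, m)) => ((g * a, b * m), (g * b, a * m))

theorem mem_image_crossProducts {q u v u' v' : ℕ} (hx : (u, v) ∈ Icc 1 q ×ˢ Icc 1 q)
    (hy : (u', v') ∈ Icc 1 q ×ˢ Icc 1 q) (h : u * v = u' * v') :
    ((u, v), (u', v')) ∈ ((Icc 1 q ×ˢ Icc 1 q) ×ˢ (Icc 1 q ×ˢ Icc 1 q)).image crossProducts := by
  rw [mem_product] at hx hy
  have hu : u ≠ 0 := by have := (mem_Icc.1 hx.1).1; omega
  obtain ⟨g, a, b, m, rfl, hv, hu', hv'⟩ := exists_four_factors_of_mul_eq_mul hu h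
  refine mem_image.2 ⟨((g, a), (b, m)), ?_, ?_⟩
  · simp only [mem_product]
    exact ⟨⟨Nat.mem_Icc_one_of_dvd (dvd_mul_right g a) hx.1,
        Nat.mem_Icc_one_of_dvd (dvd_mul_left a g) hx.1⟩,
      Nat.mem_Icc_one_of_dvd (Dvd.intro_left g hu') hy.1,
      Nat.mem_Icc_one_of_dvd (Dvd.intro_left b hv) hx.2⟩
  · rw [← hv, ← hu', ← hv']
    rfl

theorem sum_sq_aFac_div_le (q : ℕ) (s : Finset ℕ) :
    ∑ n ∈ s, (aFac q n : ℝ) ^ 2 / n ≤ (∑ j ∈ Icc 1 q, (j : ℝ)⁻¹) ^ 4 := by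
  set box := Icc 1 q ×ˢ Icc 1 q
  set w : (ℕ × ℕ) × (ℕ × ℕ) → ℝ := fun p => ((p.1.1 * p.1.2 : ℕ) : ℝ)⁻¹
  set E := (box ×ˢ box).image crossProducts
  have fiber (n : ℕ) : (aFac q n : ℝ) ^ 2 / n ≤ ∑ p ∈ E with p.1.1 * p.1.2 = n, w p := by
    set F := box.filter (fun p => p.1 * p.2 = n)
    calc (aFac q n : ℝ) ^ 2 / n = ∑ p ∈ F ×ˢ F, w p := by
          rw [sum_congr rfl (g := fun _ => (n : ℝ)⁻¹), sum_const, card_product, nsmul_eq_mul]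
          · simp [aFac, F, box, div_eq_mul_inv, sq]
          · intro p hp
            simp only [F, mem_product, mem_filter] at hp
            simp only [w, hp.1.2]
      _ ≤ ∑ p ∈ E with p.1.1 * p.1.2 = n, w p := by
          refine sum_le_sum_of_subset_of_nonneg ?_ fun _ _ _ => by positivity
          rintro ⟨⟨u, v⟩, ⟨u', v'⟩⟩ hp
          simp only [F, mem_product, mem_filter] at hp
          exact mem_filter.2 ⟨mem_image_crossProducts hp.1.1
            hp.2.1 (hp.1.2.trans hp.2.2.symm), hp.1.2⟩
  calc ∑ n ∈ s, (aFac q n : ℝ) ^ 2 / n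
      ≤ ∑ n ∈ s, ∑ p ∈ E with p.1.1 * p.1.2 = n, w p := sum_le_sum fun n _ => fiber n
    _ ≤ ∑ p ∈ E, w p :=
        sum_fiberwise_le_sum_of_sum_fiber_nonneg fun _ _ => sum_nonneg fun _ _ => by positivity
    _ ≤ ∑ t ∈ box ×ˢ box, w (crossProducts t) :=
        sum_image_le_of_nonneg fun _ _ => by positivity
    _ = (∑ j ∈ Icc 1 q, (j : ℝ)⁻¹) ^ 4 := by
        simp only [box, w, sum_product, crossProducts, Nat.cast_mul, mul_inv, ← mul_sum,
          ← sum_mul]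
        ring

theorem sum_inv_residue_class_le {q : ℕ} (hq : 0 < q) (r : ZMod q) :
    ∑ n ∈ (Ioc q (q ^ 2)).filter (fun n : ℕ => (n : ZMod q) = r), (n : ℝ)⁻¹ ≤
      (∑ j ∈ Icc 1 q, (j : ℝ)⁻¹) / q := by
  set S := (Ioc q (q ^ 2)).filter fun n : ℕ => (n : ZMod q) = r
  have quotient_injOn : Set.InjOn (· / q) S := by
    intro n hn n' hn' h
    have hmod : n % q = n' % q :=
      (ZMod.natCast_eq_natCast_iff n n' q).1 ((mem_filter.1 hn).2.trans (mem_filter.1 hn').2.symm)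
    rw [← Nat.div_add_mod n q, ← Nat.div_add_mod n' q, hmod]
    exact congrArg (q * · + n' % q) h
  have quotient_mem (n) (hn : n ∈ S) : n / q ∈ Icc 1 q := by
    have hn := (mem_Ioc.1 (mem_filter.1 hn).1)
    refine mem_Icc.2 ⟨(Nat.one_le_div_iff hq).2 hn.1.le, Nat.div_le_of_le_mul ?_⟩
    simpa [sq] using hn.2
  calc ∑ n ∈ S, (n : ℝ)⁻¹ ≤ ∑ n ∈ S, ((q * (n / q) : ℕ) : ℝ)⁻¹ := by
        refine sum_le_sum fun n hn => inv_anti₀ ?_ (Nat.cast_le.2 (Nat.mul_div_le n q))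
        have := (mem_Icc.1 (quotient_mem n hn)).1
        positivity
    _ = ∑ j ∈ S.image (· / q), ((q * j : ℕ) : ℝ)⁻¹ :=
        (sum_image (f := fun j => ((q * j : ℕ) : ℝ)⁻¹) quotient_injOn).symm
    _ ≤ ∑ j ∈ Icc 1 q, ((q * j : ℕ) : ℝ)⁻¹ :=
        sum_le_sum_of_subset_of_nonneg (image_subset_iff.2 quotient_mem)
          fun _ _ _ => by positivity
    _ = (∑ j ∈ Icc 1 q, (j : ℝ)⁻¹) / q := by
        rw [div_eq_inv_mul, mul_sum]
        simp only [Nat.cast_mul, mul_inv]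

/-- There is an absolute constant `C > 0` such that for all `q ≥ 3`,
`∑_{(ℓ,q)=1, ℓ≤q} (∑_{q<n≤q², n≡ℓ (q)} a_q(n)/n)² ≤ C log⁵(q+2)/q`. -/
theorem sum_sq_tail_aFac_le : ∃ C : ℝ, 0 < C ∧ ∀ q : ℕ, 3 ≤ q →
    ∑ ℓ ∈ (Finset.Icc 1 q).filter (fun ℓ => Nat.Coprime ℓ q),
      (∑ n ∈ (Finset.Ioc q (q ^ 2)).filter (fun n : ℕ => ((n : ZMod q)) = (ℓ : ZMod q)),
        (aFac q n : ℝ) / n) ^ 2 ≤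
      C * Real.log (q + 2) ^ 5 / q := by
  refine ⟨32, by norm_num, fun q hq => ?_⟩
  set H := ∑ j ∈ Icc 1 q, (j : ℝ)⁻¹
  set T := Ioc q (q ^ 2)
  have hH : H ≤ 2 * Real.log (q + 2) := sum_Icc_inv_le_two_mul_log (by omega)
  calc _ ≤ ∑ ℓ ∈ (Icc 1 q).filter (fun ℓ => Nat.Coprime ℓ q),
          H / q * ∑ n ∈ T.filter (fun n : ℕ => (n : ZMod q) = ℓ), (aFac q n : ℝ) ^ 2 / n := by
        refine sum_le_sum fun ℓ _ => (sq_sum_div_le_sum_inv_mul_sum_sq_div _ _).trans ?_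
        gcongr
        exact sum_inv_residue_class_le (by omega) _
    _ ≤ H / q * ∑ n ∈ T, (aFac q n : ℝ) ^ 2 / n := by
        rw [← mul_sum]
        gcongr
        exact sum_sum_filter_le_sum ((ZMod.natCast_injOn_Icc_one q).mono (filter_subset _ _))
          fun _ _ => by positivity
    _ ≤ H / q * H ^ 4 := by gcongr; exact sum_sq_aFac_div_le q T
    _ ≤ 32 * Real.log (q + 2) ^ 5 / q := by
        rw [div_mul_eq_mul_div, ← pow_succ']
        gcongr
        calc H ^ 5 ≤ (2 * Real.log (q + 2)) ^ 5 := by gcongr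
          _ = 32 * Real.log (q + 2) ^ 5 := by ring
end
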